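/- arXiv:2301.01335 — 8 statements merged into one kernel-verified Lean document; each statement's English description precedes it below -/
import Mathlib

section
/- Let Θ be a nonempty set, {P_θ : θ ∈ Θ} a family of probability measures on a measurable space 𝒴, and {S_θ : θ ∈ Θ} an e-collection for it, i.e. each S_θ : 𝒴 → [0,∞) is measurable with ∫ S_θ dP_θ ≤ 1. Let 𝒜 be a set, let L : Θ × 𝒜 → ℝ satisfy the no-sure-gain condition sup_{θ∈Θ} L(θ,a) ≥ 0 for every a ∈ 𝒜, and let δ : 𝒴 → 𝒜 be a decision rule. Define the e-posterior P̄(θ|y) := 1/S_θ(y) (with 1/0 := ∞) and the e-posterior risk bound R̄(y) := sup_{θ∈Θ} P̄(θ|y)·L(θ,δ(y)), with conventions ∞·0 := 0 and ∞·c := ∞ for c > 0. Assume y ↦ L(θ,δ(y))/R̄(y) is measurable for each θ, with the conventions c/∞ := 0 and c/0 := 0 for c ≤ 0 (whenever R̄(y) = 0 one automatically has L(θ,δ(y)) ≤ 0). Then for every θ ∈ Θ: E_{Y∼P_θ}[ L(θ,δ(Y)) / R̄(Y) ] ≤ 1. -/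
/-!
Fix `θ` and `y` with `R̄(y) ∈ (0, ∞)`. Since `R̄(y)` dominates the `θ`-term of its supremum,
`L(θ, δ y) / S_θ(y) ≤ R̄(y)`, which rearranges to `L(θ, δ y) / R̄(y) ≤ S_θ(y)` (positive parts
in `ℝ≥0∞`). Hence the integrand is bounded by the e-variable `S_θ`, whose `P_θ`-expectation
is at most `1`.
-/

open MeasureTheory ENNReal

theorem ENNReal.div_le_of_div_le_of_ne {a b c : ℝ≥0∞} (hb : b ≠ ∞) (hc0 : c ≠ 0)
    (hc : c ≠ ∞) (h : a / b ≤ c) : a / c ≤ b := by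
  rw [ENNReal.div_le_iff_le_mul (.inr hc) (.inl hb)] at h
  rwa [ENNReal.div_le_iff_le_mul (.inl hc0) (.inl hc), mul_comm]

theorem ENNReal.ofReal_div_toReal_le_of_inv_mul_le {s l : ℝ} {r : ℝ≥0∞} (hr0 : r ≠ 0)
    (hr : r ≠ ∞) (h : (ENNReal.ofReal s)⁻¹ * ENNReal.ofReal l ≤ r) :
    ENNReal.ofReal (l / r.toReal) ≤ ENNReal.ofReal s := by
  rw [ENNReal.ofReal_div_of_pos (ENNReal.toReal_pos hr0 hr), ENNReal.ofReal_toReal hr]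
  rw [mul_comm, ← div_eq_mul_inv] at h
  exact ENNReal.div_le_of_div_le_of_ne ENNReal.ofReal_ne_top hr0 hr h

theorem MeasureTheory.integral_le_toReal_lintegral_ofReal {α : Type*} [MeasurableSpace α]
    (μ : Measure α) (f : α → ℝ) : ∫ a, f a ∂μ ≤ (∫⁻ a, ENNReal.ofReal (f a) ∂μ).toReal := by
  by_cases hf : Integrable f μ
  · rw [integral_eq_lintegral_pos_part_sub_lintegral_neg_part hf]
    linarith [(∫⁻ a, ENNReal.ofReal (-f a) ∂μ).toReal_nonneg]
  · rw [integral_undef hf]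
    exact ENNReal.toReal_nonneg

theorem e_posterior_risk_bound_valid_general
    {Θ 𝒴 𝒜 : Type*} [MeasurableSpace 𝒴]
    (P : Θ → Measure 𝒴)
    -- the e-collection
    (S : Θ → 𝒴 → ℝ)
    (hS_e : ∀ θ, ∫⁻ y, ENNReal.ofReal (S θ y) ∂(P θ) ≤ 1)
    -- the loss function, satisfying the no-sure-gain condition
    (L : Θ × 𝒜 → ℝ)
    -- the decision rule
    (δ : 𝒴 → 𝒜)
    -- the e-posterior `P̄(θ ∣ y) = 1 / S θ y`  (with `1/0 = ∞`)
    (Pbar : Θ → 𝒴 → ℝ≥0∞)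
    (hPbar : ∀ θ y, Pbar θ y = (ENNReal.ofReal (S θ y))⁻¹)
    -- the e-posterior risk bound `R̄ y = ⨆ θ, P̄(θ ∣ y) * L(θ, δ y)`
    -- (with conventions `∞ * 0 = 0`, `∞ * c = ∞` for `c > 0`; negative losses do not
    -- contribute to the supremum)
    (Rbar : 𝒴 → ℝ≥0∞)
    (hRbar : ∀ y, Rbar y = ⨆ θ : Θ, Pbar θ y * ENNReal.ofReal (L (θ, δ y)))
    -- the integrand `L(θ, δ y) / R̄ y`, with conventions `c / ∞ = 0` and `c / 0 = 0`
    -- (whenever `R̄ y = 0` one automatically has `L (θ, δ y) ≤ 0`)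
    (g : Θ → 𝒴 → ℝ)
    (hg : ∀ θ y, g θ y =
      if Rbar y = 0 ∨ Rbar y = ⊤ then 0 else L (θ, δ y) / (Rbar y).toReal) :
    ∀ θ : Θ, ∫ y, g θ y ∂(P θ) ≤ 1 := by
  intro θ
  have hg_le_S : ∀ y, ENNReal.ofReal (g θ y) ≤ ENNReal.ofReal (S θ y) := by
    intro y
    rw [hg θ y]
    split_ifs with hR
    · simp
    · obtain ⟨hR0, hR⟩ := not_or.1 hR
      refine ENNReal.ofReal_div_toReal_le_of_inv_mul_le hR0 hR ?_
      rw [← hPbar, hRbar]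
      exact le_iSup (fun θ' ↦ Pbar θ' y * ENNReal.ofReal (L (θ', δ y))) θ
  calc ∫ y, g θ y ∂(P θ) ≤ (∫⁻ y, ENNReal.ofReal (g θ y) ∂(P θ)).toReal :=
        integral_le_toReal_lintegral_ofReal _ _
    _ ≤ 1 := ENNReal.toReal_le_of_le_ofReal zero_le_one <| by
        simpa using (lintegral_mono hg_le_S).trans (hS_e θ)

/-- Proposition 1, first claim (TheBoundA): validity of e-posterior risk assessments.
Given an e-collection `S` for a model `P`, a loss `L` satisfying the no-sure-gain
condition, and a decision rule `δ`, the e-posterior risk bound `R̄` satisfies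
`E_{P θ}[ L(θ, δ Y) / R̄ Y ] ≤ 1` for every `θ`. -/
theorem e_posterior_risk_bound_valid
    {Θ 𝒴 𝒜 : Type*} [Nonempty Θ] [MeasurableSpace 𝒴]
    (P : Θ → Measure 𝒴) [∀ θ, IsProbabilityMeasure (P θ)]
    -- the e-collection
    (S : Θ → 𝒴 → ℝ)
    (hS_nonneg : ∀ θ y, 0 ≤ S θ y)
    (hS_meas : ∀ θ, Measurable (S θ))
    (hS_e : ∀ θ, ∫⁻ y, ENNReal.ofReal (S θ y) ∂(P θ) ≤ 1)
    -- the loss function, satisfying the no-sure-gain condition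
    (L : Θ × 𝒜 → ℝ)
    (hL_nsg : ∀ a : 𝒜, (0 : EReal) ≤ ⨆ θ : Θ, (L (θ, a) : EReal))
    -- the decision rule
    (δ : 𝒴 → 𝒜)
    -- the e-posterior `P̄(θ ∣ y) = 1 / S θ y`  (with `1/0 = ∞`)
    (Pbar : Θ → 𝒴 → ℝ≥0∞)
    (hPbar : ∀ θ y, Pbar θ y = (ENNReal.ofReal (S θ y))⁻¹)
    -- the e-posterior risk bound `R̄ y = ⨆ θ, P̄(θ ∣ y) * L(θ, δ y)`
    -- (with conventions `∞ * 0 = 0`, `∞ * c = ∞` for `c > 0`; negative losses do not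
    -- contribute to the supremum)
    (Rbar : 𝒴 → ℝ≥0∞)
    (hRbar : ∀ y, Rbar y = ⨆ θ : Θ, Pbar θ y * ENNReal.ofReal (L (θ, δ y)))
    -- the integrand `L(θ, δ y) / R̄ y`, with conventions `c / ∞ = 0` and `c / 0 = 0`
    -- (whenever `R̄ y = 0` one automatically has `L (θ, δ y) ≤ 0`)
    (g : Θ → 𝒴 → ℝ)
    (hg : ∀ θ y, g θ y =
      if Rbar y = 0 ∨ Rbar y = ⊤ then 0 else L (θ, δ y) / (Rbar y).toReal)
    (hg_meas : ∀ θ, Measurable (g θ)) :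
    ∀ θ : Θ, ∫ y, g θ y ∂(P θ) ≤ 1 :=
  e_posterior_risk_bound_valid_general P S hS_e L δ Pbar hPbar Rbar hRbar g hg
end

section
/- Let Θ, {P_θ}, {S_θ}, 𝒜, δ be as follows: {S_θ : θ ∈ Θ} is an e-collection for the family of probability measures {P_θ} on 𝒴 (each S_θ : 𝒴 → [0,∞) measurable with ∫ S_θ dP_θ ≤ 1), L : Θ × 𝒜 → [0,∞) is a nonnegative loss function, and δ : 𝒴 → 𝒜 a decision rule. Define R̄(y,a) := sup_{θ∈Θ} (1/S_θ(y))·L(θ,a) with 1/0 := ∞, ∞·0 := 0, ∞·c := ∞ for c > 0. Let 𝒰 be a measurable space, b : 𝒴 × 𝒰 × Θ × 𝒜 → [0,∞) a measurable function, θ ∈ Θ, and P'_θ any probability measure on 𝒴 × 𝒰 whose marginal on 𝒴 equals P_θ. Then E_{(Y,U)∼P'_θ}[ b(Y,U,θ,δ(Y)) · L(θ,δ(Y)) ] ≤ sup_{(y,u,θ') ∈ 𝒴×𝒰×Θ} b(y,u,θ',δ(y)) · R̄(y,δ(y)) (where both sides may be infinite). -/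
open MeasureTheory ENNReal

/-!
Fix `θ` and write `s(y) = S θ y`. The weighted risk at `(y, u)` is at most `s(y)` times the
right-hand side `C`: dividing by `s(y)` leaves `b · (s(y)⁻¹ L(θ, δ y)) ≤ b · R̄(y, δ y) ≤ C`, and
when `s(y) = 0` this forces the weighted risk to vanish unless `C = ∞`. Integrating against `P'`,
whose `𝒴`-marginal is `P θ`, and using `E_{P θ}[s] ≤ 1` gives the bound.
-/

theorem lintegral_le_of_div_le_of_lintegral_le_one {α : Type*} [MeasurableSpace α]
    {μ : Measure α} {f s : α → ℝ≥0∞} {C : ℝ≥0∞} (hs : ∫⁻ x, s x ∂μ ≤ 1)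
    (hs_top : ∀ x, s x ≠ ∞) (hf : ∀ x, f x / s x ≤ C) : ∫⁻ x, f x ∂μ ≤ C := by
  rcases eq_or_ne C ∞ with rfl | hC
  · exact le_top
  calc ∫⁻ x, f x ∂μ ≤ ∫⁻ x, s x * C ∂μ := lintegral_mono fun x =>
        mul_comm C (s x) ▸ (ENNReal.div_le_iff_le_mul (.inr hC) (.inl (hs_top x))).1 (hf x)
    _ = (∫⁻ x, s x ∂μ) * C := lintegral_mul_const' C s hC
    _ ≤ 1 * C := by gcongr
    _ = C := one_mul C

theorem e_posterior_risk_bound_weighted_general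
    {Θ 𝒴 𝒰 𝒜 : Type*} [MeasurableSpace 𝒴] [MeasurableSpace 𝒰]
    (P : Θ → Measure 𝒴)
    -- the e-collection
    (S : Θ → 𝒴 → ℝ)
    (hS_meas : ∀ θ, Measurable (S θ))
    (hS_e : ∀ θ, ∫⁻ y, ENNReal.ofReal (S θ y) ∂(P θ) ≤ 1)
    -- the nonnegative loss function
    (L : Θ × 𝒜 → ℝ)
    -- the decision rule
    (δ : 𝒴 → 𝒜)
    -- the e-posterior risk bound `R̄(y, a) = ⨆ θ, (1 / S θ y) * L (θ, a)`
    -- (with `1/0 = ∞`, `∞ * 0 = 0`, `∞ * c = ∞` for `c > 0`)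
    (Rbar : 𝒴 → 𝒜 → ℝ≥0∞)
    (hRbar : ∀ y a, Rbar y a =
      ⨆ θ : Θ, (ENNReal.ofReal (S θ y))⁻¹ * ENNReal.ofReal (L (θ, a)))
    -- the nonnegative measurable weight function
    (b : 𝒴 → 𝒰 → Θ → 𝒜 → ℝ)
    -- a fixed `θ` and a joint distribution `P'` with `𝒴`-marginal `P θ`
    (θ : Θ)
    (P' : Measure (𝒴 × 𝒰))
    (hP'marg : P'.map Prod.fst = P θ) :
    ∫⁻ q, ENNReal.ofReal (b q.1 q.2 θ (δ q.1)) * ENNReal.ofReal (L (θ, δ q.1)) ∂P'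
      ≤ ⨆ (y : 𝒴) (u : 𝒰) (θ' : Θ),
          ENNReal.ofReal (b y u θ' (δ y)) * Rbar y (δ y) := by
  have hS_e_joint : ∫⁻ q, ENNReal.ofReal (S θ q.1) ∂P' ≤ 1 := by
    rw [← lintegral_map (hS_meas θ).ennreal_ofReal measurable_fst, hP'marg]
    exact hS_e θ
  refine lintegral_le_of_div_le_of_lintegral_le_one hS_e_joint (fun _ => ofReal_ne_top) fun q => ?_
  have hR : (ENNReal.ofReal (S θ q.1))⁻¹ * ENNReal.ofReal (L (θ, δ q.1)) ≤ Rbar q.1 (δ q.1) := by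
    rw [hRbar]
    exact le_iSup (fun θ' => (ENNReal.ofReal (S θ' q.1))⁻¹ * ENNReal.ofReal (L (θ', δ q.1))) θ
  calc _ = ENNReal.ofReal (b q.1 q.2 θ (δ q.1)) *
          ((ENNReal.ofReal (S θ q.1))⁻¹ * ENNReal.ofReal (L (θ, δ q.1))) := by
        rw [mul_div_assoc, ENNReal.div_eq_inv_mul]
    _ ≤ ENNReal.ofReal (b q.1 q.2 θ (δ q.1)) * Rbar q.1 (δ q.1) := by gcongr
    _ ≤ _ := le_iSup₂_of_le q.1 q.2 (le_iSup_of_le (α := ℝ≥0∞) θ le_rfl)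

/-- Proposition 1, second claim (TheBoundB): for any e-collection `S`, nonnegative loss `L`,
decision rule `δ`, nonnegative weight function `b`, and any probability measure `P'` on
`𝒴 × 𝒰` whose marginal on `𝒴` is `P θ`,
`E_{(Y,U) ∼ P'}[ b(Y,U,θ,δ Y) * L(θ, δ Y) ] ≤ sup_{(y,u,θ')} b(y,u,θ',δ y) * R̄(y, δ y)`,
where both sides may be infinite. -/
theorem e_posterior_risk_bound_weighted
    {Θ 𝒴 𝒰 𝒜 : Type*} [Nonempty Θ] [MeasurableSpace 𝒴] [MeasurableSpace 𝒰]
    (P : Θ → Measure 𝒴) [∀ θ, IsProbabilityMeasure (P θ)]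
    -- the e-collection
    (S : Θ → 𝒴 → ℝ)
    (hS_nonneg : ∀ θ y, 0 ≤ S θ y)
    (hS_meas : ∀ θ, Measurable (S θ))
    (hS_e : ∀ θ, ∫⁻ y, ENNReal.ofReal (S θ y) ∂(P θ) ≤ 1)
    -- the nonnegative loss function
    (L : Θ × 𝒜 → ℝ)
    (hL_nonneg : ∀ θ a, 0 ≤ L (θ, a))
    -- the decision rule
    (δ : 𝒴 → 𝒜)
    (hLδ_meas : ∀ θ, Measurable fun y => L (θ, δ y))
    -- the e-posterior risk bound `R̄(y, a) = ⨆ θ, (1 / S θ y) * L (θ, a)`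
    -- (with `1/0 = ∞`, `∞ * 0 = 0`, `∞ * c = ∞` for `c > 0`)
    (Rbar : 𝒴 → 𝒜 → ℝ≥0∞)
    (hRbar : ∀ y a, Rbar y a =
      ⨆ θ : Θ, (ENNReal.ofReal (S θ y))⁻¹ * ENNReal.ofReal (L (θ, a)))
    -- the nonnegative measurable weight function
    (b : 𝒴 → 𝒰 → Θ → 𝒜 → ℝ)
    (hb_nonneg : ∀ y u θ a, 0 ≤ b y u θ a)
    (hb_meas : ∀ θ, Measurable fun q : 𝒴 × 𝒰 => b q.1 q.2 θ (δ q.1))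
    -- a fixed `θ` and a joint distribution `P'` with `𝒴`-marginal `P θ`
    (θ : Θ)
    (P' : Measure (𝒴 × 𝒰)) [IsProbabilityMeasure P']
    (hP'marg : P'.map Prod.fst = P θ) :
    ∫⁻ q, ENNReal.ofReal (b q.1 q.2 θ (δ q.1)) * ENNReal.ofReal (L (θ, δ q.1)) ∂P'
      ≤ ⨆ (y : 𝒴) (u : 𝒰) (θ' : Θ),
          ENNReal.ofReal (b y u θ' (δ y)) * Rbar y (δ y) :=
  e_posterior_risk_bound_weighted_general P S hS_meas hS_e L δ Rbar hRbar b θ P' hP'marg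
end

section
/- Let p_θ(x^n) = ∏_{i=1}^n (2π)^{-1/2} exp(−(x_i−θ)²/2), let n* ≥ 1 (the anticipated sample size), and for each θ ∈ ℝ define the two-point prior-based e-variable S_θ(x^n) := ( (1/2) p_{θ−√(2/n*)}(x^n) + (1/2) p_{θ+√(2/n*)}(x^n) ) / p_θ(x^n), with e-posterior P̄(θ|x^n) := 1/S_θ(x^n). Let θ̂ = n^{-1}∑_{i=1}^n x_i. Then for every x^n ∈ ℝ^n: sup_{θ∈ℝ} (θ−θ̂)² · P̄(θ|x^n) = (1/n) · (n*/n) · e^{n/n*} · sup_{x∈ℝ} x²/(e^x + e^{−x}). -/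
open Real

/-! Gaussian likelihood ratios are exponentials of a function linear in the data, so the
two-point mixture in closed form is `S_θ(xⁿ) = e^{-n/n*} cosh t` with `t = n √(2/n*) (θ̂ - θ)`.
Then `(θ - θ̂)² / S_θ(xⁿ) = (1/n)(n*/n) e^{n/n*} · t² / (eᵗ + e⁻ᵗ)`, and `θ ↦ t` is an affine
bijection of `ℝ`, so the two suprema agree. -/

theorem prod_gaussian_kernel_eq {ι : Type*} [Fintype ι] (c : ℝ) (x : ι → ℝ) (θ : ℝ) :
    ∏ i, c * exp (-(x i - θ) ^ 2 / 2)
      = (∏ i, c * exp (-x i ^ 2 / 2)) * exp (θ * ∑ i, x i - Fintype.card ι * θ ^ 2 / 2) := by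
  have hterm : ∀ i, c * exp (-(x i - θ) ^ 2 / 2)
      = c * exp (-x i ^ 2 / 2) * exp (θ * x i - θ ^ 2 / 2) := fun i => by
    rw [mul_assoc, ← exp_add]; ring_nf
  simp_rw [hterm, Finset.prod_mul_distrib, ← exp_sum, Finset.sum_sub_distrib, ← Finset.mul_sum,
    Finset.sum_const, Finset.card_univ, nsmul_eq_mul]
  ring_nf

theorem two_point_exp_quadratic_ratio {A : ℝ} (hA : A ≠ 0) (s m θ δ : ℝ) :
    ((1 / 2) * (A * exp ((θ - δ) * s - m * (θ - δ) ^ 2 / 2))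
        + (1 / 2) * (A * exp ((θ + δ) * s - m * (θ + δ) ^ 2 / 2)))
      / (A * exp (θ * s - m * θ ^ 2 / 2))
      = exp (-(m * δ ^ 2 / 2)) * cosh (δ * (s - m * θ)) := by
  have hminus : (θ - δ) * s - m * (θ - δ) ^ 2 / 2
      = (θ * s - m * θ ^ 2 / 2) + (-(m * δ ^ 2 / 2) + -(δ * (s - m * θ))) := by ring
  have hplus : (θ + δ) * s - m * (θ + δ) ^ 2 / 2
      = (θ * s - m * θ ^ 2 / 2) + (-(m * δ ^ 2 / 2) + δ * (s - m * θ)) := by ring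
  rw [hminus, hplus, cosh_eq]
  simp only [exp_add]
  field_simp
  ring

theorem prod_gaussian_two_point_ratio {ι : Type*} [Fintype ι] {c : ℝ} (hc : c ≠ 0)
    (x : ι → ℝ) (θ δ : ℝ) :
    ((1 / 2) * ∏ i, c * exp (-(x i - (θ - δ)) ^ 2 / 2)
        + (1 / 2) * ∏ i, c * exp (-(x i - (θ + δ)) ^ 2 / 2))
      / ∏ i, c * exp (-(x i - θ) ^ 2 / 2)
      = exp (-(Fintype.card ι * δ ^ 2 / 2)) * cosh (δ * (∑ i, x i - Fintype.card ι * θ)) := by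
  simp only [prod_gaussian_kernel_eq c x]
  exact two_point_exp_quadratic_ratio
    (Finset.prod_ne_zero_iff.2 fun i _ => mul_ne_zero hc (exp_ne_zero _)) _ _ _ _

theorem iSup_comp_mul_sub {f : ℝ → ℝ} {a : ℝ} (ha : a ≠ 0) (b : ℝ) :
    ⨆ θ, f (a * (b - θ)) = ⨆ t, f t :=
  Function.Surjective.iSup_comp (fun t => ⟨b - t / a, by field_simp; ring⟩) f

/-- Equation (superbound): for the two-point prior-based e-posterior for the normal
location family with anticipated sample size `n*`,
`sup_θ (θ−θ̂)² · P̄(θ ∣ xⁿ) = (1/n)(n*/n) e^{n/n*} · sup_t t²/(eᵗ+e⁻ᵗ)`. -/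
theorem twopoint_eposterior_squared_error_risk
    (n nstar : ℕ) (hn : 1 ≤ n) (hnstar : 1 ≤ nstar)
    -- the density of `n` i.i.d. `N(θ,1)` observations
    (p : ℝ → (Fin n → ℝ) → ℝ)
    (hp : ∀ θ x, p θ x = ∏ i, (2 * π) ^ (-(1 : ℝ) / 2) * exp (-(x i - θ) ^ 2 / 2))
    -- the two-point prior-based e-variable, with mass 1/2 on each of `θ ± √(2/n*)`
    (S : ℝ → (Fin n → ℝ) → ℝ)
    (hS : ∀ θ x, S θ x =
      ((1 / 2) * p (θ - Real.sqrt (2 / (nstar : ℝ))) x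
        + (1 / 2) * p (θ + Real.sqrt (2 / (nstar : ℝ))) x) / p θ x)
    -- the data and the MLE
    (x : Fin n → ℝ)
    (θhat : ℝ) (hθhat : θhat = (∑ i, x i) / n) :
    (⨆ θ : ℝ, (θ - θhat) ^ 2 * (S θ x)⁻¹)
      = (1 / (n : ℝ)) * ((nstar : ℝ) / n) * exp ((n : ℝ) / nstar)
          * ⨆ t : ℝ, t ^ 2 / (exp t + exp (-t)) := by
  have hn0 : (n : ℝ) ≠ 0 := by positivity
  have hnstar0 : (nstar : ℝ) ≠ 0 := by positivity
  set δ := √(2 / (nstar : ℝ))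
  have hδsq : δ ^ 2 = 2 / nstar := sq_sqrt (by positivity)
  have hsum : ∑ i, x i = n * θhat := by rw [hθhat]; field_simp
  have hS_closed : ∀ θ, S θ x = exp (-(n / nstar)) * cosh (n * δ * (θhat - θ)) := fun θ => by
    rw [hS, hp, hp, hp, prod_gaussian_two_point_ratio (by positivity), Fintype.card_fin, hsum,
      hδsq]
    congr 2 <;> field_simp
  have hsummand : ∀ θ, (θ - θhat) ^ 2 * (S θ x)⁻¹
      = (1 / (n : ℝ)) * ((nstar : ℝ) / n) * exp ((n : ℝ) / nstar)
          * ((n * δ * (θhat - θ)) ^ 2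
            / (exp (n * δ * (θhat - θ)) + exp (-(n * δ * (θhat - θ))))) :=
    fun θ => by
      rw [hS_closed, cosh_eq, exp_neg (n / nstar : ℝ)]
      field_simp
      rw [hδsq]
      field_simp
      ring
  simp_rw [hsummand]
  rw [← mul_iSup_of_nonneg (by positivity),
    iSup_comp_mul_sub (f := fun t => t ^ 2 / (exp t + exp (-t))) (by positivity)]
end

section
/- Let p_θ(x^n) = ∏_{i=1}^n (2π)^{-1/2} exp(−(x_i−θ)²/2), let n* ≥ 1, and define the two-point prior-based e-variable S_θ(x^n) := ( (1/2) p_{θ−√(2/n*)}(x^n) + (1/2) p_{θ+√(2/n*)}(x^n) ) / p_θ(x^n), with e-posterior P̄(θ|x^n) := 1/S_θ(x^n). Fix x^n ∈ ℝ^n and let θ̂ = n^{-1}∑ x_i. Then there exists a continuous function f : [0,∞) → [0,∞) with lim_{x→∞} x·f(x) = 0 such that for all θ ∈ ℝ: P̄(θ|x^n) = f( (1/2)(θ̂−θ)² ), i.e. the e-posterior is a function of the KL divergence D(θ̂‖θ) of the required type (so that, combined with the minimax result, the MLE θ̂ is the e-posterior minimax estimator for weighted squared error loss). -/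
/-!
Writing `u = θ̂ - θ` and `δ = √(2/n*)`, the likelihood ratio of the normal location model is
`p_{θ+d}(xⁿ) / p_θ(xⁿ) = exp (n d u - n d² / 2)`, so averaging over `d = ±δ` gives
`S_θ(xⁿ) = exp (-n δ² / 2) · cosh (n δ u)`. Since `cosh` is even and `|u| = √(2 · u² / 2)`, the
e-posterior is `f (u² / 2)` with `f t = exp (n δ² / 2) / cosh (n δ √(2t))`, and `t f(t) → 0`
because `cosh` grows exponentially.
-/

open Real Filter

noncomputable section

namespace NormalLocation

variable {ι : Type*} [Fintype ι]

def likelihood (x : ι → ℝ) (θ : ℝ) : ℝ :=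
  ∏ i, (2 * π) ^ (-(1 : ℝ) / 2) * exp (-(x i - θ) ^ 2 / 2)

theorem likelihood_pos (x : ι → ℝ) (θ : ℝ) : 0 < likelihood x θ :=
  Finset.prod_pos fun _ _ => mul_pos (rpow_pos_of_pos (by positivity) _) (exp_pos _)

theorem likelihood_add (x : ι → ℝ) (θ d : ℝ) :
    likelihood x (θ + d) =
      likelihood x θ * exp (d * ∑ i, (x i - θ) - Fintype.card ι * d ^ 2 / 2) := by
  have hterm : ∀ i, -(x i - (θ + d)) ^ 2 / 2 = -(x i - θ) ^ 2 / 2 + (d * (x i - θ) - d ^ 2 / 2) :=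
    fun i => by ring
  calc likelihood x (θ + d)
      = ∏ i, ((2 * π) ^ (-(1 : ℝ) / 2) * exp (-(x i - θ) ^ 2 / 2)) *
          exp (d * (x i - θ) - d ^ 2 / 2) := by
        simp only [likelihood, hterm, exp_add, mul_assoc]
    _ = likelihood x θ * exp (∑ i, (d * (x i - θ) - d ^ 2 / 2)) := by
        rw [Finset.prod_mul_distrib, exp_sum, likelihood]
    _ = likelihood x θ * exp (d * ∑ i, (x i - θ) - Fintype.card ι * d ^ 2 / 2) := by
        rw [Finset.sum_sub_distrib, ← Finset.mul_sum, Finset.sum_const, Finset.card_univ,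
          nsmul_eq_mul, mul_div_assoc]

theorem twoPoint_mixture_div_likelihood (x : ι → ℝ) (θ δ : ℝ) :
    ((1 / 2) * likelihood x (θ - δ) + (1 / 2) * likelihood x (θ + δ)) / likelihood x θ =
      exp (-(Fintype.card ι * δ ^ 2 / 2)) * cosh (δ * ∑ i, (x i - θ)) := by
  set m := ∑ i, (x i - θ)
  set K := Fintype.card ι * δ ^ 2 / 2
  have hminus : -δ * m - Fintype.card ι * (-δ) ^ 2 / 2 = -K + -(δ * m) := by ring
  have hplus : δ * m - Fintype.card ι * δ ^ 2 / 2 = -K + δ * m := by ring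
  have hL := (likelihood_pos x θ).ne'
  rw [sub_eq_add_neg, likelihood_add, likelihood_add, hminus, hplus, exp_add, exp_add, cosh_eq]
  field_simp
  ring

end NormalLocation

def twoPointEPosteriorOfKL (a c t : ℝ) : ℝ :=
  c / cosh (a * √(2 * t))

theorem continuous_twoPointEPosteriorOfKL (a c : ℝ) : Continuous (twoPointEPosteriorOfKL a c) :=
  continuous_const.div (by fun_prop) fun _ => (cosh_pos _).ne'

theorem twoPointEPosteriorOfKL_nonneg (a : ℝ) {c : ℝ} (hc : 0 ≤ c) (t : ℝ) :
    0 ≤ twoPointEPosteriorOfKL a c t :=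
  div_nonneg hc (cosh_pos _).le

theorem twoPointEPosteriorOfKL_half_sq (a c u : ℝ) :
    twoPointEPosteriorOfKL a c ((1 / 2) * u ^ 2) = c / cosh (a * u) := by
  rw [twoPointEPosteriorOfKL, show 2 * ((1 / 2) * u ^ 2) = u ^ 2 by ring, sqrt_sq_eq_abs]
  rcases abs_cases u with ⟨hu, -⟩ | ⟨hu, -⟩ <;> simp [hu]

theorem tendsto_sq_mul_inv_cosh_atTop : Tendsto (fun s => s ^ 2 * (cosh s)⁻¹) atTop (nhds 0) := by
  have hbound : ∀ s, (cosh s)⁻¹ ≤ 2 * exp (-s) := fun s => by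
    rw [exp_neg, ← div_eq_mul_inv, le_div_iff₀ (exp_pos s), inv_mul_eq_div,
      div_le_iff₀ (cosh_pos s), cosh_eq]
    linarith [exp_pos (-s)]
  have hlim : Tendsto (fun s => 2 * (s ^ 2 * exp (-s))) atTop (nhds 0) := by
    simpa using (tendsto_pow_mul_exp_neg_atTop_nhds_zero 2).const_mul 2
  refine tendsto_of_tendsto_of_tendsto_of_le_of_le tendsto_const_nhds hlim
    (fun s => by positivity) fun s => ?_
  calc s ^ 2 * (cosh s)⁻¹ ≤ s ^ 2 * (2 * exp (-s)) := by gcongr; exact hbound s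
    _ = 2 * (s ^ 2 * exp (-s)) := by ring

theorem tendsto_mul_twoPointEPosteriorOfKL_atTop {a : ℝ} (ha : 0 < a) (c : ℝ) :
    Tendsto (fun t => t * twoPointEPosteriorOfKL a c t) atTop (nhds 0) := by
  have hs : Tendsto (fun t => a * √(2 * t)) atTop atTop :=
    (tendsto_sqrt_atTop.comp (tendsto_id.const_mul_atTop two_pos)).const_mul_atTop ha
  have hlim := (tendsto_sq_mul_inv_cosh_atTop.comp hs).const_mul (c / (2 * a ^ 2))
  rw [mul_zero] at hlim
  refine hlim.congr' ?_
  filter_upwards [eventually_ge_atTop 0] with t ht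
  simp only [Function.comp, twoPointEPosteriorOfKL, mul_pow, sq_sqrt (by positivity : 0 ≤ 2 * t)]
  field_simp

/-- Part 2 of Proposition (KLahoy): the two-point prior-based e-posterior for the
normal location family is a function `f(D(θ̂‖θ))` of the KL divergence
`D(θ̂‖θ) = (1/2)(θ̂−θ)²`, where `f : [0,∞) → [0,∞)` is continuous with
`x·f(x) → 0` as `x → ∞`. -/
theorem twopoint_eposterior_is_function_of_KL
    (n nstar : ℕ) (hn : 1 ≤ n) (hnstar : 1 ≤ nstar)
    -- the density of `n` i.i.d. `N(θ,1)` observations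
    (p : ℝ → (Fin n → ℝ) → ℝ)
    (hp : ∀ θ x, p θ x = ∏ i, (2 * π) ^ (-(1 : ℝ) / 2) * exp (-(x i - θ) ^ 2 / 2))
    -- the two-point prior-based e-variable with anticipated sample size `n*`
    (S : ℝ → (Fin n → ℝ) → ℝ)
    (hS : ∀ θ x, S θ x =
      ((1 / 2) * p (θ - Real.sqrt (2 / (nstar : ℝ))) x
        + (1 / 2) * p (θ + Real.sqrt (2 / (nstar : ℝ))) x) / p θ x)
    -- the fixed data and the MLE
    (x : Fin n → ℝ)
    (θhat : ℝ) (hθhat : θhat = (∑ i, x i) / n) :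
    ∃ f : ℝ → ℝ,
      ContinuousOn f (Set.Ici 0) ∧
      (∀ t ∈ Set.Ici (0 : ℝ), 0 ≤ f t) ∧
      Tendsto (fun t => t * f t) atTop (nhds 0) ∧
      ∀ θ : ℝ, (S θ x)⁻¹ = f ((1 / 2) * (θhat - θ) ^ 2) := by
  set δ := √(2 / (nstar : ℝ))
  have hn0 : (0 : ℝ) < n := by exact_mod_cast hn
  have hδ : 0 < δ := sqrt_pos.mpr (by positivity)
  have hsum : ∀ θ, ∑ i, (x i - θ) = n * (θhat - θ) := fun θ => by
    rw [Finset.sum_sub_distrib, Finset.sum_const, Finset.card_univ, Fintype.card_fin, hθhat,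
      nsmul_eq_mul]
    field_simp
  refine ⟨twoPointEPosteriorOfKL (n * δ) (exp (n * δ ^ 2 / 2)),
    (continuous_twoPointEPosteriorOfKL _ _).continuousOn,
    fun t _ => twoPointEPosteriorOfKL_nonneg _ (exp_pos _).le t,
    tendsto_mul_twoPointEPosteriorOfKL_atTop (by positivity) _, fun θ => ?_⟩
  have hp' : p = fun θ x => NormalLocation.likelihood x θ := funext₂ hp
  rw [hS, hp', NormalLocation.twoPoint_mixture_div_likelihood, hsum, Fintype.card_fin,
    twoPointEPosteriorOfKL_half_sq, mul_inv, ← exp_neg, neg_neg, div_eq_mul_inv]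
  ring_nf
end
end

section
/- Let Θ ⊆ ℝ, b > 0, L : Θ × Θ → [0,∞), and fix θ̆ ∈ Θ. Let P̄, P̄' : Θ → [0,∞] (e-posteriors at the fixed data point), let P̄_sup := sup_{θ∈Θ} P̄(θ), and suppose C_sup > 0 is such that P̄(θ) ≤ C_sup · P̄'(θ) for all θ ∈ Θ. Suppose θ_L, θ_R ∈ Θ with θ_L < θ_R satisfy: (1) for all θ ∈ Θ with θ ≥ θ_R, P̄'(θ) ≤ 1 and the map θ ↦ P̄'(θ)·L(θ,θ̆) is nonincreasing on Θ ∩ [θ_R,∞); (2) for all θ ∈ Θ with θ ≤ θ_L, P̄'(θ) ≤ 1 and θ ↦ P̄'(θ)·L(θ,θ̆) is nondecreasing on Θ ∩ (−∞,θ_L]. Then sup_{θ∈Θ} b · P̄(θ) · L(θ,θ̆) ≤ b · max{C_sup, P̄_sup} · sup_{θ ∈ Θ ∩ [θ_L,θ_R]} L(θ,θ̆). -/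
open ENNReal

/-- Proposition (dampening) of the Supplementary Material: localization of the
e-posterior risk assessment to the interval `[θ_L, θ_R]`. -/
theorem eposterior_risk_localization
    (Θ : Set ℝ) (b : ℝ) (hb : 0 < b)
    -- the loss function
    (L : ℝ → ℝ → ℝ) (hL_nonneg : ∀ θ θ', 0 ≤ L θ θ')
    -- the estimate at the fixed data point
    (θbrev : ℝ) (hθbrev : θbrev ∈ Θ)
    -- the e-posteriors at the fixed data point
    (Pbar Pbar' : ℝ → ℝ≥0∞)
    (Csup : ℝ≥0∞) (hCsup_pos : 0 < Csup)
    (hdom : ∀ θ ∈ Θ, Pbar θ ≤ Csup * Pbar' θ)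
    (θL θR : ℝ) (hθL : θL ∈ Θ) (hθR : θR ∈ Θ) (hLR : θL < θR)
    -- condition (1): to the right of `θ_R`, `P̄' ≤ 1` and `P̄'(θ)·L(θ,θ̆)` is nonincreasing
    (hright1 : ∀ θ ∈ Θ, θR ≤ θ → Pbar' θ ≤ 1)
    (hright2 : ∀ θ₁ ∈ Θ, ∀ θ₂ ∈ Θ, θR ≤ θ₁ → θ₁ ≤ θ₂ →
      Pbar' θ₂ * ENNReal.ofReal (L θ₂ θbrev) ≤ Pbar' θ₁ * ENNReal.ofReal (L θ₁ θbrev))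
    -- condition (2): to the left of `θ_L`, `P̄' ≤ 1` and `P̄'(θ)·L(θ,θ̆)` is nondecreasing
    (hleft1 : ∀ θ ∈ Θ, θ ≤ θL → Pbar' θ ≤ 1)
    (hleft2 : ∀ θ₁ ∈ Θ, ∀ θ₂ ∈ Θ, θ₁ ≤ θ₂ → θ₂ ≤ θL →
      Pbar' θ₁ * ENNReal.ofReal (L θ₁ θbrev) ≤ Pbar' θ₂ * ENNReal.ofReal (L θ₂ θbrev)) :
    (⨆ θ ∈ Θ, ENNReal.ofReal b * Pbar θ * ENNReal.ofReal (L θ θbrev))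
      ≤ ENNReal.ofReal b * max Csup (⨆ θ ∈ Θ, Pbar θ) *
          ⨆ θ ∈ Θ ∩ Set.Icc θL θR, ENNReal.ofReal (L θ θbrev) := by
  set S : ℝ≥0∞ := ⨆ θ ∈ Θ ∩ Set.Icc θL θR, ENNReal.ofReal (L θ θbrev) with hS
  set M : ℝ≥0∞ := max Csup (⨆ θ ∈ Θ, Pbar θ) with hM
  refine iSup₂_le fun θ hθ => ?_
  rw [mul_assoc, mul_assoc]
  refine mul_le_mul_right ?_ _
  rcases le_or_gt θ θL with h1 | h1
  · -- left of θL
    have key : Pbar' θ * ENNReal.ofReal (L θ θbrev)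
        ≤ Pbar' θL * ENNReal.ofReal (L θL θbrev) := hleft2 θ hθ θL hθL h1 le_rfl
    have hLS : ENNReal.ofReal (L θL θbrev) ≤ S := by
      refine le_iSup₂_of_le θL ⟨hθL, le_rfl, le_of_lt hLR⟩ le_rfl
    calc Pbar θ * ENNReal.ofReal (L θ θbrev)
        ≤ Csup * Pbar' θ * ENNReal.ofReal (L θ θbrev) :=
          mul_le_mul_left (hdom θ hθ) _
      _ = Csup * (Pbar' θ * ENNReal.ofReal (L θ θbrev)) := by ring
      _ ≤ Csup * (Pbar' θL * ENNReal.ofReal (L θL θbrev)) := mul_le_mul_right key _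
      _ ≤ Csup * (1 * ENNReal.ofReal (L θL θbrev)) :=
          mul_le_mul_right (mul_le_mul_left (hleft1 θL hθL le_rfl) _) _
      _ = Csup * ENNReal.ofReal (L θL θbrev) := by rw [one_mul]
      _ ≤ M * S := mul_le_mul' (le_max_left _ _) hLS
  rcases lt_or_ge θ θR with h2 | h2
  · -- in [θL, θR]
    have hPM : Pbar θ ≤ M := le_trans (le_iSup₂_of_le θ hθ le_rfl) (le_max_right _ _)
    have hLS : ENNReal.ofReal (L θ θbrev) ≤ S :=
      le_iSup₂_of_le θ ⟨hθ, le_of_lt h1, le_of_lt h2⟩ le_rfl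
    exact mul_le_mul' hPM hLS
  · -- right of θR
    have key : Pbar' θ * ENNReal.ofReal (L θ θbrev)
        ≤ Pbar' θR * ENNReal.ofReal (L θR θbrev) := hright2 θR hθR θ hθ le_rfl h2
    have hLS : ENNReal.ofReal (L θR θbrev) ≤ S :=
      le_iSup₂_of_le θR ⟨hθR, le_of_lt hLR, le_rfl⟩ le_rfl
    calc Pbar θ * ENNReal.ofReal (L θ θbrev)
        ≤ Csup * Pbar' θ * ENNReal.ofReal (L θ θbrev) :=
          mul_le_mul_left (hdom θ hθ) _
      _ = Csup * (Pbar' θ * ENNReal.ofReal (L θ θbrev)) := by ring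
      _ ≤ Csup * (Pbar' θR * ENNReal.ofReal (L θR θbrev)) := mul_le_mul_right key _
      _ ≤ Csup * (1 * ENNReal.ofReal (L θR θbrev)) :=
          mul_le_mul_right (mul_le_mul_left (hright1 θR hθR le_rfl) _) _
      _ = Csup * ENNReal.ofReal (L θR θbrev) := by rw [one_mul]
      _ ≤ M * S := mul_le_mul' (le_max_left _ _) hLS
end

section
/- Let p_θ(x^n) = ∏_{i=1}^n (2π)^{-1/2} exp(−(x_i−θ)²/2), let λ > 0, let w be the density of the N(0, 1/λ) prior and p_W(x^n) = ∫ p_θ(x^n) w(θ)dθ. Define the dampened Savage–Dickey e-variable S^{[1/2]}_θ(x^n) := 1/2 + (1/2)·p_W(x^n)/p_θ(x^n) and its e-posterior P̄^{[1/2]}(θ|x^n) := 1/S^{[1/2]}_θ(x^n). Fix x^n ∈ ℝ^n, let θ̂ = n^{-1}∑ x_i, and let C := log( p_{θ̂}(x^n)/p_W(x^n) ) = (1/2)log((n+λ)/λ) + (1/2)(nλ/(n+λ))θ̂². If C ≥ 1, then sup_{θ∈ℝ} (θ−θ̂)² · P̄^{[1/2]}(θ|x^n) ≤ (4/n) ·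 C. -/
open MeasureTheory Real

/-- Equations (boundy)/(boundyboundy): the dampened Savage–Dickey e-posterior for the
normal location family with an `N(0, 1/λ)` prior achieves squared-error risk
assessment at most `(4/n)·C`, where `C = log(p_θ̂(xⁿ)/p_W(xⁿ))`, whenever `C ≥ 1`. -/
theorem dampened_savage_dickey_risk_bound
    (n : ℕ) (hn : 1 ≤ n) (lam : ℝ) (hlam : 0 < lam)
    -- the density of `n` i.i.d. `N(θ,1)` observations
    (p : ℝ → (Fin n → ℝ) → ℝ)
    (hp : ∀ θ x, p θ x = ∏ i, (2 * π) ^ (-(1 : ℝ) / 2) * exp (-(x i - θ) ^ 2 / 2))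
    -- the `N(0, 1/λ)` prior density and Bayes marginal
    (w : ℝ → ℝ)
    (hw : ∀ θ, w θ = Real.sqrt (lam / (2 * π)) * exp (-lam * θ ^ 2 / 2))
    (pW : (Fin n → ℝ) → ℝ)
    (hpW : ∀ x, pW x = ∫ θ, p θ x * w θ)
    -- the dampened Savage–Dickey e-variable `S^{[1/2]}_θ = 1/2 + (1/2)·p_W/p_θ`
    (S : ℝ → (Fin n → ℝ) → ℝ)
    (hS : ∀ θ x, S θ x = 1 / 2 + (1 / 2) * (pW x / p θ x))
    -- the fixed data, the MLE, and the constant `C`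
    (x : Fin n → ℝ)
    (θhat : ℝ) (hθhat : θhat = (∑ i, x i) / n)
    (C : ℝ)
    (hC : C = Real.log (p θhat x / pW x))
    (hC' : C = (1 / 2) * Real.log ((n + lam) / lam)
      + (1 / 2) * ((n : ℝ) * lam / (n + lam)) * θhat ^ 2)
    (hC1 : 1 ≤ C) :
    (⨆ θ : ℝ, (θ - θhat) ^ 2 * (S θ x)⁻¹) ≤ (4 / (n : ℝ)) * C := by
  have hn0 : (0:ℝ) < n := by exact_mod_cast hn
  have h2π : (0:ℝ) < 2 * π := by positivity
  -- closed form of p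
  have hpform : ∀ θ, p θ x
      = ((2 * π) ^ (-(1:ℝ) / 2)) ^ n * exp (-(∑ i, (x i - θ) ^ 2) / 2) := by
    intro θ
    rw [hp θ x, Finset.prod_mul_distrib, Finset.prod_const, Finset.card_univ,
      Fintype.card_fin, ← Real.exp_sum]
    congr 1
    rw [← Finset.sum_div, Finset.sum_neg_distrib]
  have hppos : ∀ θ, 0 < p θ x := by
    intro θ; rw [hpform]; positivity
  have hple1 : ∀ θ, p θ x ≤ 1 := by
    intro θ
    rw [hp θ x]
    apply Finset.prod_le_one
    · intro i _
      positivity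
    · intro i _
      have h1 : (2 * π) ^ (-(1:ℝ) / 2) ≤ 1 := by
        apply Real.rpow_le_one_of_one_le_of_nonpos
        · nlinarith [Real.pi_gt_three]
        · norm_num
      have h2 : exp (-(x i - θ) ^ 2 / 2) ≤ 1 := by
        apply Real.exp_le_one_iff.mpr
        nlinarith [sq_nonneg (x i - θ)]
      calc (2 * π) ^ (-(1:ℝ) / 2) * exp (-(x i - θ) ^ 2 / 2)
          ≤ 1 * 1 := by
            apply mul_le_mul h1 h2 (exp_pos _).le (by norm_num)
        _ = 1 := by norm_num
  have hwpos : ∀ θ, 0 < w θ := by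
    intro θ; rw [hw]; positivity
  -- positivity of the Bayes marginal
  have hBpos : 0 < pW x := by
    rw [hpW]
    set f : ℝ → ℝ := fun θ => p θ x * w θ with hf
    have hfpos : ∀ θ, 0 < f θ := fun θ => mul_pos (hppos θ) (hwpos θ)
    have hfcont : Continuous f := by
      have : f = fun θ =>
          (∏ i, (2 * π) ^ (-(1:ℝ) / 2) * exp (-(x i - θ) ^ 2 / 2))
            * (Real.sqrt (lam / (2 * π)) * exp (-lam * θ ^ 2 / 2)) := by
        funext θ; show p θ x * w θ = _; rw [hp θ x, hw]
      rw [this]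
      fun_prop
    have hg : Integrable (fun θ : ℝ =>
        Real.sqrt (lam / (2 * π)) * exp (-(lam / 2) * θ ^ 2)) := by
      exact (integrable_exp_neg_mul_sq (by positivity)).const_mul _
    have hfi : Integrable f := by
      apply hg.mono' hfcont.aestronglyMeasurable
      filter_upwards with θ
      rw [Real.norm_of_nonneg (hfpos θ).le, hf]
      simp only
      rw [hw]
      have hb : exp (-lam * θ ^ 2 / 2) = exp (-(lam / 2) * θ ^ 2) := by ring_nf
      rw [hb]
      calc p θ x * (Real.sqrt (lam / (2 * π)) * exp (-(lam / 2) * θ ^ 2))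
          ≤ 1 * (Real.sqrt (lam / (2 * π)) * exp (-(lam / 2) * θ ^ 2)) :=
            mul_le_mul_of_nonneg_right (hple1 θ) (by positivity)
        _ = _ := one_mul _
    rw [integral_pos_iff_support_of_nonneg (fun θ => (hfpos θ).le) hfi]
    have : Function.support f = Set.univ := by
      ext θ; simp [Function.mem_support, (hfpos θ).ne']
    rw [this]
    simp
  -- pW x = p θhat x * exp (-C)
  have hexpC : p θhat x / pW x = exp C := by
    rw [hC]; exact (Real.exp_log (div_pos (hppos θhat) hBpos)).symm
  have hpWeq : pW x = p θhat x * exp (-C) := by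
    have := hexpC
    field_simp at this
    rw [Real.exp_neg]
    field_simp
    linarith [this]
  -- sum decomposition around the MLE
  have hsx : ∑ i, x i = n * θhat := by
    rw [hθhat]; field_simp
  have hsum : ∀ θ : ℝ, ∑ i, (x i - θ) ^ 2
      = (∑ i, (x i - θhat) ^ 2) + n * (θ - θhat) ^ 2 := by
    intro θ
    have expand : ∀ t : ℝ, ∑ i, (x i - t) ^ 2
        = (∑ i, (x i) ^ 2) - 2 * t * (∑ i, x i) + n * t ^ 2 := by
      intro t
      have : ∀ i : Fin n, (x i - t) ^ 2 = (x i) ^ 2 - 2 * t * (x i) + t ^ 2 := by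
        intro i; ring
      rw [Finset.sum_congr rfl fun i _ => this i]
      rw [Finset.sum_add_distrib, Finset.sum_sub_distrib, ← Finset.mul_sum,
        Finset.sum_const, Finset.card_univ, Fintype.card_fin, nsmul_eq_mul]
    rw [expand θ, expand θhat, hsx]
    ring
  -- ratio identity
  have hratio : ∀ θ : ℝ, p θ x = p θhat x * exp (-(n : ℝ) * (θ - θhat) ^ 2 / 2) := by
    intro θ
    have hA := hsum θ
    set A : ℝ := ∑ i, (x i - θhat) ^ 2 with hAdef
    rw [hpform, hpform, hA, mul_assoc, ← Real.exp_add]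
    congr 2
    ring
  -- closed form of S
  have hSform : ∀ θ : ℝ, S θ x
      = 1 / 2 + 1 / 2 * exp ((n : ℝ) * (θ - θhat) ^ 2 / 2 - C) := by
    intro θ
    rw [hS, hpWeq, hratio θ, mul_div_mul_left _ _ (hppos θhat).ne', ← Real.exp_sub]
    have harg : -C - (-(n : ℝ) * (θ - θhat) ^ 2 / 2)
        = (n : ℝ) * (θ - θhat) ^ 2 / 2 - C := by ring
    rw [harg]
  -- bound each term
  apply ciSup_le
  intro θ
  set d : ℝ := (θ - θhat) ^ 2 with hd
  have hd0 : 0 ≤ d := sq_nonneg _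
  rw [hSform θ, ← hd]
  set e : ℝ := exp ((n : ℝ) * d / 2 - C) with he
  have hepos : 0 < e := exp_pos _
  have hlin : (n : ℝ) * d / 2 - C + 1 ≤ e := by
    rw [he]; exact Real.add_one_le_exp _
  have hSpos : (0:ℝ) < 1 / 2 + 1 / 2 * e := by positivity
  rw [← div_eq_mul_inv, div_le_iff₀ hSpos]
  rw [show (4 / (n : ℝ)) * C * (1 / 2 + 1 / 2 * e) = (4 * C * (1 / 2 + 1 / 2 * e)) / n by ring,
    le_div_iff₀ hn0]
  nlinarith [mul_nonneg (sub_nonneg.mpr hC1) hepos.le]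
end

section
/- Let P be a probability measure on a measurable space 𝒴, let E ⊆ 𝒴 be a measurable event, and let α̂ : 𝒴 → (0,1] be a measurable function whose range is countable. Suppose the Kiefer-type conditional coverage guarantee holds: for every α in the range of α̂, P(E ∩ {α̂ = α}) ≤ α · P(α̂ = α). Then the Vovk-type guarantee holds: E_P[ 1_E / α̂ ] ≤ 1. (Applied with E = {θ ∉ CI(Y)} for each θ, this shows that every Kiefer-type conditional frequentist confidence set estimator with countable partition is a Vovk-type confidence set estimator, and hence that S := 1_{θ∉CI(Y)}/α̂(Y) is an e-variable.) -/
open MeasureTheory ENNReal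

/-! On the level set `{α̂ = α}` the integrand `1 / α̂` is the constant `1 / α`, so the Kiefer
guarantee bounds the contribution of that level set by `P (α̂ = α)`. As `α̂` takes countably many
values, the level sets partition the space measurably and these contributions add up to at most
`P 𝒴 = 1`. -/

theorem lintegral_comp_eq_tsum_of_countable_range {𝒴 β : Type*} [MeasurableSpace 𝒴]
    [MeasurableSpace β] [MeasurableSingletonClass β] (μ : Measure 𝒴) {f : 𝒴 → β}
    (hf : Measurable f) (hrange : (Set.range f).Countable) (g : β → ℝ≥0∞) :
    ∫⁻ y, g (f y) ∂μ = ∑' b : Set.range f, g b * μ (f ⁻¹' {(b : β)}) := by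
  have := hrange.to_subtype
  have hf' : Measurable (Set.rangeFactorization f) := hf.rangeFactorization
  calc ∫⁻ y, g (f y) ∂μ = ∫⁻ b, g b ∂(μ.map (Set.rangeFactorization f)) := by
        rw [lintegral_map (measurable_of_countable _) hf']
        rfl
    _ = ∑' b : Set.range f, g b * μ (f ⁻¹' {(b : β)}) := by
        rw [lintegral_countable']
        congr! 2 with b
        rw [Measure.map_apply hf' (measurableSet_singleton b)]
        congr 2
        ext y
        exact Subtype.ext_iff

theorem kiefer_implies_vovk_general
    {𝒴 : Type*} [MeasurableSpace 𝒴]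
    (P : Measure 𝒴) [IsProbabilityMeasure P]
    (E : Set 𝒴)
    (αhat : 𝒴 → ℝ)
    (hαhat_meas : Measurable αhat)
    (hcountable : (Set.range αhat).Countable)
    -- the Kiefer-type conditional coverage guarantee
    (hkiefer : ∀ α ∈ Set.range αhat,
      P (E ∩ αhat ⁻¹' {α}) ≤ ENNReal.ofReal α * P (αhat ⁻¹' {α})) :
    ∫⁻ y in E, (ENNReal.ofReal (αhat y))⁻¹ ∂P ≤ 1 := by
  have hlevel : ∀ α : Set.range αhat,
      (ENNReal.ofReal α)⁻¹ * P.restrict E (αhat ⁻¹' {(α : ℝ)}) ≤ 1 * P (αhat ⁻¹' {(α : ℝ)}) := by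
    rintro ⟨α, hα⟩
    rw [Measure.restrict_apply (hαhat_meas (measurableSet_singleton α)), Set.inter_comm, one_mul]
    calc (ENNReal.ofReal α)⁻¹ * P (E ∩ αhat ⁻¹' {α})
        ≤ (ENNReal.ofReal α)⁻¹ * ENNReal.ofReal α * P (αhat ⁻¹' {α}) := by
          rw [mul_assoc]
          gcongr
          exact hkiefer α hα
      _ ≤ P (αhat ⁻¹' {α}) := mul_le_of_le_one_left' (ENNReal.inv_mul_le_one _)
  calc ∫⁻ y in E, (ENNReal.ofReal (αhat y))⁻¹ ∂P
      = ∑' α : Set.range αhat, (ENNReal.ofReal α)⁻¹ * P.restrict E (αhat ⁻¹' {(α : ℝ)}) :=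
        lintegral_comp_eq_tsum_of_countable_range (P.restrict E) hαhat_meas hcountable
          fun α ↦ (ENNReal.ofReal α)⁻¹
    _ ≤ ∑' α : Set.range αhat, 1 * P (αhat ⁻¹' {(α : ℝ)}) := ENNReal.tsum_le_tsum hlevel
    _ = ∫⁻ _, 1 ∂P := (lintegral_comp_eq_tsum_of_countable_range P hαhat_meas hcountable 1).symm
    _ = 1 := by simp

/-- Vovk's (1993) implication: every Kiefer-type conditional frequentist coverage
guarantee (over a countable partition induced by `α̂`) implies the Vovk-type
guarantee `E_P[ 1_E / α̂ ] ≤ 1`. -/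
theorem kiefer_implies_vovk
    {𝒴 : Type*} [MeasurableSpace 𝒴]
    (P : Measure 𝒴) [IsProbabilityMeasure P]
    (E : Set 𝒴) (hE : MeasurableSet E)
    (αhat : 𝒴 → ℝ)
    (hαhat_meas : Measurable αhat)
    (hαhat_range : ∀ y, αhat y ∈ Set.Ioc (0 : ℝ) 1)
    (hcountable : (Set.range αhat).Countable)
    -- the Kiefer-type conditional coverage guarantee
    (hkiefer : ∀ α ∈ Set.range αhat,
      P (E ∩ αhat ⁻¹' {α}) ≤ ENNReal.ofReal α * P (αhat ⁻¹' {α})) :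
    ∫⁻ y in E, (ENNReal.ofReal (αhat y))⁻¹ ∂P ≤ 1 :=
  kiefer_implies_vovk_general P E αhat hαhat_meas hcountable hkiefer
end

section
/- Let p_θ(x^n) = ∏_{i=1}^n (2π)^{-1/2} exp(−(x_i−θ)²/2), let λ > 0, let w be the density of the N(0,1/λ) prior, p_W(x^n) = ∫ p_θ(x^n)w(θ)dθ, and let P̄^SD(θ|x^n) := p_θ(x^n)/p_W(x^n) be the (undampened) Savage–Dickey e-posterior. Then for every x^n ∈ ℝ^n with MLE θ̂ = n^{-1}∑ x_i: sup_{θ∈ℝ} (θ−θ̂)² · P̄^SD(θ|x^n) ≥ (1/n) · √((n+λ)/λ) · e^{−1/2}. In particular the risk assessment of the pure Savage–Dickey e-posterior for squared error loss is of order at least n^{−1/2}, as witnessed by evaluating at θ = θ̂ + n^{−1/2}. -/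
open MeasureTheory Real

/-!
The likelihood factors through the sample mean θ̂ as `p θ x = p θ̂ x · exp (-(n/2)(θ - θ̂)²)`,
so the Bayes marginal is the integral of a product of two Gaussians, computed by completing
the square. This gives the closed form
`p θ x / pW x = √((n+λ)/λ) · exp (-(n/2)(θ - θ̂)² + nλθ̂²/(2(n+λ)))`. Dropping the nonnegative
second term of the exponent and evaluating at `θ = θ̂ + n^{-1/2}`, where `(θ - θ̂)² = 1/n`,
gives the bound.
-/

theorem sum_sq_sub_eq_sum_sq_sub_add_card_mul {ι : Type*} [Fintype ι] (x : ι → ℝ) {μ : ℝ}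
    (hμ : ∑ i, x i = Fintype.card ι * μ) (θ : ℝ) :
    ∑ i, (x i - θ) ^ 2 = ∑ i, (x i - μ) ^ 2 + Fintype.card ι * (θ - μ) ^ 2 := by
  have hcentered : ∑ i, (x i - μ) = 0 := by simp [Finset.sum_sub_distrib, hμ]
  calc ∑ i, (x i - θ) ^ 2
      = ∑ i, ((x i - μ) ^ 2 + 2 * (μ - θ) * (x i - μ) + (θ - μ) ^ 2) :=
        Finset.sum_congr rfl fun i _ => by ring
    _ = ∑ i, (x i - μ) ^ 2 + Fintype.card ι * (θ - μ) ^ 2 := by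
        simp [Finset.sum_add_distrib, ← Finset.mul_sum, hcentered]

theorem prod_gaussian_eq_mul_exp {ι : Type*} [Fintype ι] (x : ι → ℝ) {μ : ℝ}
    (hμ : ∑ i, x i = Fintype.card ι * μ) (θ : ℝ) :
    ∏ i, (2 * π) ^ (-(1 : ℝ) / 2) * exp (-(x i - θ) ^ 2 / 2)
      = (∏ i, (2 * π) ^ (-(1 : ℝ) / 2) * exp (-(x i - μ) ^ 2 / 2))
        * exp (-(Fintype.card ι / 2) * (θ - μ) ^ 2) := by
  simp only [Finset.prod_mul_distrib, ← exp_sum, mul_assoc, ← exp_add]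
  congr 2
  have h := sum_sq_sub_eq_sum_sq_sub_add_card_mul x hμ θ
  simp only [neg_div, Finset.sum_neg_distrib, ← Finset.sum_div]
  linear_combination -h / 2

theorem integral_exp_neg_mul_sq_sub_mul_exp_neg_mul_sq {a b : ℝ} (hab : 0 < a + b) (μ : ℝ) :
    ∫ θ, exp (-a * (θ - μ) ^ 2) * exp (-b * θ ^ 2)
      = √(π / (a + b)) * exp (-(a * b / (a + b)) * μ ^ 2) := by
  have hsquare : ∀ θ, exp (-a * (θ - μ) ^ 2) * exp (-b * θ ^ 2)
      = exp (-(a * b / (a + b)) * μ ^ 2) * exp (-(a + b) * (θ - a * μ / (a + b)) ^ 2) := by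
    intro θ
    rw [← exp_add, ← exp_add]
    congr 1
    field_simp
    ring
  simp_rw [hsquare]
  rw [integral_const_mul, integral_sub_right_eq_self (fun θ => exp (-(a + b) * θ ^ 2)),
    integral_gaussian, mul_comm]

theorem sq_mul_exp_neg_mul_sq_le {a : ℝ} (ha : 0 < a) (t : ℝ) :
    t ^ 2 * exp (-a * t ^ 2) ≤ exp (-1) / a := by
  rw [le_div_iff₀ ha, neg_mul, mul_comm, ← mul_assoc]
  exact mul_exp_neg_le_exp_neg_one _

theorem le_ciSup_sq_mul_gaussian {B a : ℝ} (hB : 0 ≤ B) (ha : 0 < a) (μ : ℝ) :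
    B / (2 * a) * exp (-(1 : ℝ) / 2)
      ≤ ⨆ θ : ℝ, (θ - μ) ^ 2 * (B * exp (-a * (θ - μ) ^ 2)) := by
  have hbdd : BddAbove (Set.range fun θ : ℝ => (θ - μ) ^ 2 * (B * exp (-a * (θ - μ) ^ 2))) := by
    refine ⟨B * (exp (-1) / a), ?_⟩
    rintro _ ⟨θ, rfl⟩
    simp only [mul_left_comm _ B]
    exact mul_le_mul_of_nonneg_left (sq_mul_exp_neg_mul_sq_le ha _) hB
  refine le_of_eq_of_le ?_ (le_ciSup hbdd (μ + 1 / √(2 * a)))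
  have hsq : (μ + 1 / √(2 * a) - μ) ^ 2 = 1 / (2 * a) := by
    rw [add_sub_cancel_left, div_pow, one_pow, sq_sqrt (by positivity)]
  rw [hsq]
  field_simp

theorem savageDickey_eq {n : ℕ} {lam : ℝ} (hlam : 0 < lam) {p : ℝ → (Fin n → ℝ) → ℝ}
    (hp : ∀ θ x, p θ x = ∏ i, (2 * π) ^ (-(1 : ℝ) / 2) * exp (-(x i - θ) ^ 2 / 2))
    {w : ℝ → ℝ} (hw : ∀ θ, w θ = √(lam / (2 * π)) * exp (-lam * θ ^ 2 / 2))
    (x : Fin n → ℝ) {θhat : ℝ} (hθhat : ∑ i, x i = n * θhat) (θ : ℝ) :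
    p θ x / ∫ θ', p θ' x * w θ'
      = √((n + lam) / lam)
        * exp (-(n / 2) * (θ - θhat) ^ 2 + n * lam / (n + lam) * θhat ^ 2 / 2) := by
  have hlik : ∀ θ, p θ x = p θhat x * exp (-(n / 2) * (θ - θhat) ^ 2) := fun θ => by
    simpa only [hp, Fintype.card_fin] using prod_gaussian_eq_mul_exp x (by simpa using hθhat) θ
  have hmax : 0 < p θhat x := by rw [hp]; positivity
  have hmarginal : ∫ θ', p θ' x * w θ'
      = p θhat x * √(lam / (n + lam)) * exp (-(n * lam / (n + lam)) * θhat ^ 2 / 2) := by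
    have hintegrand : ∀ θ', p θ' x * w θ' = p θhat x * √(lam / (2 * π))
        * (exp (-(n / 2) * (θ' - θhat) ^ 2) * exp (-(lam / 2) * θ' ^ 2)) := fun θ' => by
      rw [hlik, hw]; ring_nf
    simp_rw [hintegrand]
    rw [integral_const_mul, integral_exp_neg_mul_sq_sub_mul_exp_neg_mul_sq (by positivity),
      mul_assoc, ← mul_assoc √_, ← sqrt_mul (by positivity), mul_assoc (p θhat x)]
    congr 3
    · field_simp
    · field_simp
  rw [hmarginal, hlik θ, mul_assoc, mul_div_mul_left _ _ hmax.ne', div_mul_eq_div_div_swap,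
    ← exp_sub, div_eq_inv_mul, ← sqrt_inv, inv_div]
  ring_nf

/-- The lower-bound claim at the end of Example (Improving Pure Savage–Dickey):
the squared-error risk assessment of the undampened Savage–Dickey e-posterior for
the normal location family with an `N(0, 1/λ)` prior is at least
`(1/n)·√((n+λ)/λ)·e^{−1/2}`, i.e. of order `n^{−1/2}`. -/
theorem pure_savage_dickey_risk_lower_bound
    (n : ℕ) (hn : 1 ≤ n) (lam : ℝ) (hlam : 0 < lam)
    -- the density of `n` i.i.d. `N(θ,1)` observations
    (p : ℝ → (Fin n → ℝ) → ℝ)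
    (hp : ∀ θ x, p θ x = ∏ i, (2 * π) ^ (-(1 : ℝ) / 2) * exp (-(x i - θ) ^ 2 / 2))
    -- the `N(0, 1/λ)` prior density and Bayes marginal
    (w : ℝ → ℝ)
    (hw : ∀ θ, w θ = Real.sqrt (lam / (2 * π)) * exp (-lam * θ ^ 2 / 2))
    (pW : (Fin n → ℝ) → ℝ)
    (hpW : ∀ x, pW x = ∫ θ, p θ x * w θ)
    -- the fixed data and the MLE
    (x : Fin n → ℝ)
    (θhat : ℝ) (hθhat : θhat = (∑ i, x i) / n) :
    (1 / (n : ℝ)) * Real.sqrt ((n + lam) / lam) * exp (-(1 : ℝ) / 2)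
      ≤ ⨆ θ : ℝ, (θ - θhat) ^ 2 * (p θ x / pW x) := by
  have hn' : (0 : ℝ) < n := by exact_mod_cast hn
  have hsum : ∑ i, x i = n * θhat := by rw [hθhat, mul_div_cancel₀ _ hn'.ne']
  set D := n * lam / (n + lam) * θhat ^ 2 / 2
  have hposterior : ∀ θ,
      p θ x / pW x = √((n + lam) / lam) * exp D * exp (-(n / 2) * (θ - θhat) ^ 2) := fun θ => by
    rw [hpW, savageDickey_eq hlam hp hw x hsum, exp_add, mul_comm (exp _), mul_assoc]
  simp only [hposterior]
  calc 1 / (n : ℝ) * √((n + lam) / lam) * exp (-1 / 2)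
      ≤ √((n + lam) / lam) * exp D / (2 * (n / 2)) * exp (-1 / 2) := by
        have hD : 1 ≤ exp D := one_le_exp (by positivity)
        rw [mul_div_cancel₀ _ two_ne_zero, one_div_mul_eq_div]
        gcongr
        exact le_mul_of_one_le_right (sqrt_nonneg _) hD
    _ ≤ _ := le_ciSup_sq_mul_gaussian (by positivity) (by positivity) θhat
end
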